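/- Let α ∈ ℝ with α ≠ −1/2, let (a, b) be an open interval with a ∈ ℝ ∪ {−∞} and b ∈ ℝ ∪ {+∞}, and let u : (a, b) → ℝ be twice differentiable and satisfy u''(x) = 2u(x)³ + x·u(x) − α on (a, b). Suppose f(x) := 2u(x)² − 2u'(x) + x satisfies f(x₀) < 0 for some x₀ ∈ (a, b) and f(x) → +∞ as x → b⁻. Then there is exactly one point z ∈ (a, b) with f(z) = 0; moreover z > x₀ and f'(z) = 2α + 1. -/

import Mathlib

open Filter Topology Set

/-- The auxiliary function `f(x) = 2 u(x)^2 - 2 u'(x) + x` appearing in the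
Bäcklund transformation for Painlevé II. -/
def piiF (u u' : ℝ → ℝ) : ℝ → ℝ := fun x => 2 * (u x) ^ 2 - 2 * u' x + x

/-- The open interval `(a, b) ⊆ ℝ` with extended-real endpoints
`a ∈ ℝ ∪ {-∞}`, `b ∈ ℝ ∪ {+∞}`. -/
def erealIoo (a b : EReal) : Set ℝ := {x : ℝ | a < (x : ℝ) ∧ ((x : ℝ) : EReal) < b}

/-- The filter of real numbers tending to the extended real `b` from the
left (this is `𝓝[<] b` if `b` is real, and `atTop` if `b = +∞`). -/
noncomputable def fromLeft (b : EReal) : Filter ℝ :=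
  Filter.comap (fun x : ℝ => (x : EReal)) (𝓝[<] b)

/- By Painlevé II, `f' = -2u f + (2α + 1)`, a linear equation for `f`. With `V` an
antiderivative of `2u`, the function `f e^V` has derivative `(2α + 1) e^V`, of the constant sign
of `2α + 1 ≠ 0`. Since `f` goes from negative at `x₀` to `+∞` at `b`, this sign must be positive,
so `f e^V` is strictly increasing: `f` crosses zero exactly once, after `x₀`, and there
`f' = 2α + 1`. -/

theorem isOpen_erealIoo (a b : EReal) : IsOpen (erealIoo a b) :=
  isOpen_Ioo.preimage continuous_coe_real_ereal

instance ordConnected_erealIoo (a b : EReal) : (erealIoo a b).OrdConnected :=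
  ordConnected_Ioo.preimage_mono EReal.coe_strictMono.monotone

theorem fromLeft_neBot {a b : EReal} (hab : a < b) : (fromLeft b).NeBot := by
  refine comap_neBot fun t ht => ?_
  obtain ⟨l, hl, hlt⟩ := (mem_nhdsLT_iff_exists_Ioo_subset' hab).1 ht
  obtain ⟨x, hlx, hxb⟩ := EReal.lt_iff_exists_real_btwn.1 hl
  exact ⟨x, hlt ⟨hlx, hxb⟩⟩

theorem exists_gt_mem_erealIoo_pos_of_tendsto_atTop {a b : EReal} {f : ℝ → ℝ} {x₀ : ℝ}
    (hx₀ : x₀ ∈ erealIoo a b) (hf : Tendsto f (fromLeft b) atTop) :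
    ∃ x₁ ∈ erealIoo a b, x₀ < x₁ ∧ 0 < f x₁ := by
  have hab : a < b := lt_trans hx₀.1 hx₀.2
  have : NeBot (fromLeft b) := fromLeft_neBot hab
  have hIoo : Ioo (max a x₀) b ∈ 𝓝[<] b := Ioo_mem_nhdsLT (max_lt hab hx₀.2)
  have hmem : ∀ᶠ x in fromLeft b, x ∈ erealIoo a b ∧ x₀ < x :=
    mem_of_superset (preimage_mem_comap hIoo) fun x ⟨hx, hxb⟩ =>
      ⟨⟨(le_max_left _ _).trans_lt hx, hxb⟩,
        EReal.coe_lt_coe_iff.1 ((le_max_right _ _).trans_lt hx)⟩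
  obtain ⟨x₁, ⟨hx₁, hx₀₁⟩, hfx₁⟩ := (hmem.and (hf.eventually_gt_atTop 0)).exists
  exact ⟨x₁, hx₁, hx₀₁, hfx₁⟩

theorem exists_hasDerivAt_of_continuousOn {S : Set ℝ} (hS : IsOpen S) [hS' : S.OrdConnected]
    {p : ℝ → ℝ} (hp : ContinuousOn p S) : ∃ V : ℝ → ℝ, ∀ x ∈ S, HasDerivAt V (p x) x := by
  rcases S.eq_empty_or_nonempty with rfl | ⟨x₀, hx₀⟩
  · exact ⟨0, by simp⟩
  refine ⟨fun x => ∫ t in x₀..x, p t, fun x hx => ?_⟩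
  exact intervalIntegral.integral_hasDerivAt_right
    (hp.mono (hS'.uIcc_subset hx₀ hx)).intervalIntegrable
    (hp.stronglyMeasurableAtFilter hS x hx) (hp.continuousAt (hS.mem_nhds hx))

section LinearODE

variable {S : Set ℝ} [S.OrdConnected] {f p : ℝ → ℝ} {c x y : ℝ}

theorem pos_of_nonneg_of_hasDerivAt_neg_mul_add (hS : IsOpen S) (hp : ContinuousOn p S)
    (hf : ∀ x ∈ S, HasDerivAt f (-p x * f x + c) x) (hc : 0 < c)
    (hx : x ∈ S) (hy : y ∈ S) (hxy : x < y) (hfx : 0 ≤ f x) : 0 < f y := by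
  obtain ⟨V, hV⟩ := exists_hasDerivAt_of_continuousOn hS hp
  -- `e^V` is an integrating factor
  have hg : ∀ z ∈ S, HasDerivAt (fun z => f z * Real.exp (V z)) (c * Real.exp (V z)) z :=
    fun z hz => ((hf z hz).mul (hV z hz).exp).congr_deriv (by ring)
  have hmono : StrictMonoOn (fun z => f z * Real.exp (V z)) S :=
    strictMonoOn_of_deriv_pos (Set.OrdConnected.convex ‹_›)
      (fun z hz => (hg z hz).continuousAt.continuousWithinAt) fun z hz => by
        rw [hS.interior_eq] at hz
        rw [(hg z hz).deriv]
        positivity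
  have hgy : 0 < f y * Real.exp (V y) :=
    (mul_nonneg hfx (Real.exp_pos _).le).trans_lt (hmono hx hy hxy)
  exact (mul_pos_iff_of_pos_right (Real.exp_pos _)).1 hgy

theorem neg_of_nonpos_of_hasDerivAt_neg_mul_add (hS : IsOpen S) (hp : ContinuousOn p S)
    (hf : ∀ x ∈ S, HasDerivAt f (-p x * f x + c) x) (hc : c < 0)
    (hx : x ∈ S) (hy : y ∈ S) (hxy : x < y) (hfx : f x ≤ 0) : f y < 0 := by
  have hnegf : ∀ x ∈ S, HasDerivAt (-f) (-p x * (-f) x + -c) x :=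
    fun x hx => (hf x hx).neg.congr_deriv (by simp only [Pi.neg_apply]; ring)
  simpa using pos_of_nonneg_of_hasDerivAt_neg_mul_add hS hp hnegf (neg_pos.2 hc) hx hy hxy
    (neg_nonneg.2 hfx)

end LinearODE

theorem hasDerivAt_piiF {α x : ℝ} {u u' u'' : ℝ → ℝ} (hu : HasDerivAt u (u' x) x)
    (hu' : HasDerivAt u' (u'' x) x) (hPII : u'' x = 2 * u x ^ 3 + x * u x - α) :
    HasDerivAt (piiF u u') (-(2 * u x) * piiF u u' x + (2 * α + 1)) x := by
  refine (((hu.pow 2).const_mul 2).sub (hu'.const_mul 2)).add (hasDerivAt_id' x) |>.congr_deriv ?_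
  simp only [piiF, hPII]
  ring

theorem piiF_exactly_one_zero_general (α : ℝ) (hα : α ≠ -1/2) (a b : EReal)
    (u u' u'' : ℝ → ℝ)
    (hu : ∀ x ∈ erealIoo a b, HasDerivAt u (u' x) x)
    (hu' : ∀ x ∈ erealIoo a b, HasDerivAt u' (u'' x) x)
    (hPII : ∀ x ∈ erealIoo a b, u'' x = 2 * (u x) ^ 3 + x * u x - α)
    (x₀ : ℝ) (hx₀ : x₀ ∈ erealIoo a b) (hfx₀ : piiF u u' x₀ < 0)
    (hfb : Tendsto (piiF u u') (fromLeft b) atTop) :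
    ∃ z ∈ erealIoo a b, piiF u u' z = 0 ∧ x₀ < z ∧
      HasDerivAt (piiF u u') (2 * α + 1) z ∧
      ∀ w ∈ erealIoo a b, piiF u u' w = 0 → w = z := by
  set S := erealIoo a b
  have hS : IsOpen S := isOpen_erealIoo a b
  have hf : ∀ x ∈ S, HasDerivAt (piiF u u') (-(2 * u x) * piiF u u' x + (2 * α + 1)) x :=
    fun x hx => hasDerivAt_piiF (hu x hx) (hu' x hx) (hPII x hx)
  have hp : ContinuousOn (fun x => 2 * u x) S :=
    fun x hx => ((hu x hx).continuousAt.const_mul 2).continuousWithinAt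
  obtain ⟨x₁, hx₁, hx₀₁, hfx₁⟩ := exists_gt_mem_erealIoo_pos_of_tendsto_atTop hx₀ hfb
  have hc : 0 < 2 * α + 1 := by
    rcases lt_or_gt_of_ne (show 2 * α + 1 ≠ 0 by contrapose! hα; linarith) with hc | hc
    · exact absurd hfx₁ (neg_of_nonpos_of_hasDerivAt_neg_mul_add hS hp hf hc hx₀ hx₁ hx₀₁
        hfx₀.le).not_gt
    · exact hc
  have hIcc : Icc x₀ x₁ ⊆ S := (ordConnected_erealIoo a b).out hx₀ hx₁
  obtain ⟨z, hz, hfz⟩ := intermediate_value_Ioo hx₀₁.le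
    (fun x hx => (hf x (hIcc hx)).continuousAt.continuousWithinAt) ⟨hfx₀, hfx₁⟩
  have hzS : z ∈ S := hIcc (Ioo_subset_Icc_self hz)
  refine ⟨z, hzS, hfz, hz.1, by simpa only [hfz, mul_zero, zero_add] using hf z hzS,
    fun w hw hfw => ?_⟩
  have hzero : ∀ v ∈ S, ∀ w ∈ S, piiF u u' v = 0 → v < w → piiF u u' w ≠ 0 :=
    fun v hv w hw hfv hvw =>
      (pos_of_nonneg_of_hasDerivAt_neg_mul_add hS hp hf hc hv hw hvw hfv.ge).ne'
  rcases lt_trichotomy w z with h | h | h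
  · exact absurd hfz (hzero w hw z hzS hfw h)
  · exact h
  · exact absurd hfw (hzero z hzS w hw hfz h)

/-- let `α ≠ -1/2` and let `u` solve Painlevé II with
parameter `α` on the open interval `(a, b)` (with `a ∈ ℝ ∪ {-∞}`,
`b ∈ ℝ ∪ {+∞}`).  If `f = 2 u^2 - 2 u' + x` is negative somewhere in
`(a, b)` and tends to `+∞` at the right endpoint, then `f` has exactly one
zero `z` in `(a, b)`; moreover `z > x₀` and `f'(z) = 2α + 1`. -/
theorem piiF_exactly_one_zero (α : ℝ) (hα : α ≠ -1/2) (a b : EReal)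
    (hab : a < b) (u u' u'' : ℝ → ℝ)
    (hu : ∀ x ∈ erealIoo a b, HasDerivAt u (u' x) x)
    (hu' : ∀ x ∈ erealIoo a b, HasDerivAt u' (u'' x) x)
    (hPII : ∀ x ∈ erealIoo a b, u'' x = 2 * (u x) ^ 3 + x * u x - α)
    (x₀ : ℝ) (hx₀ : x₀ ∈ erealIoo a b) (hfx₀ : piiF u u' x₀ < 0)
    (hfb : Tendsto (piiF u u') (fromLeft b) atTop) :
    ∃ z ∈ erealIoo a b, piiF u u' z = 0 ∧ x₀ < z ∧
      HasDerivAt (piiF u u') (2 * α + 1) z ∧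
      ∀ w ∈ erealIoo a b, piiF u u' w = 0 → w = z :=
  piiF_exactly_one_zero_general α hα a b u u' u'' hu hu' hPII x₀ hx₀ hfx₀ hfb
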